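/- Let d, N ≥ 1, μ ∈ ℝ, f : ℝ^d → ℝ^d be C¹, k̄ = 1/N, ω̄ ≠ 0, and let ū : ℝ → ℝ^d be continuous and 1-periodic. For C¹ 1-periodic v, w : ℝ → ℂ^d, with L v = −ω̄ v' + μ[v(·+k̄) − 2v + v(·−k̄)] + Df(ū(·)) v and L* w = ω̄ w' + μ[w(·+k̄) − 2w + w(·−k̄)] + Df(ū(·))ᵀ w, one has for every t ∈ ℝ: d/dt Σ_{j=0}^{N−1} ⟨w(k̄ j + ω̄ t), v(k̄ j + ω̄ t)⟩ = Σ_{j=0}^{N−1} [ ⟨(L* w)(k̄ j + ω̄ t), v(k̄ j + ω̄ t)⟩ − ⟨w(k̄ j + ω̄ t), (L v)(k̄ j + ω̄ t)⟩ ], where ⟨·,·⟩ is the Hermitian inner product on ℂ^d. -/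

import Mathlib

open Complex

/-- Complexification of the Jacobian `Df(x)` applied to a complex vector. -/
noncomputable def cJac {d : ℕ} (f : (Fin d → ℝ) → (Fin d → ℝ)) (x : Fin d → ℝ)
    (Z : Fin d → ℂ) : Fin d → ℂ :=
  fun i => ∑ l : Fin d, ((fderiv ℝ f x (Pi.single l 1) i : ℝ) : ℂ) * Z l

/-- Complexification of the transposed Jacobian `Df(x)ᵀ` applied to a complex vector. -/
noncomputable def cJacT {d : ℕ} (f : (Fin d → ℝ) → (Fin d → ℝ)) (x : Fin d → ℝ)
    (Z : Fin d → ℂ) : Fin d → ℂ :=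
  fun i => ∑ l : Fin d, ((fderiv ℝ f x (Pi.single i 1) l : ℝ) : ℂ) * Z l

/-- The linearized operator `L v = −ω̄ v' + μ[v(·+k̄) − 2v + v(·−k̄)] + Df(ū(·)) v`. -/
noncomputable def Lop {d : ℕ} (μ ωb kb : ℝ) (f : (Fin d → ℝ) → (Fin d → ℝ))
    (ub : ℝ → Fin d → ℝ) (v : ℝ → Fin d → ℂ) (ζ : ℝ) : Fin d → ℂ :=
  (-ωb) • deriv v ζ + μ • (v (ζ + kb) - (2:ℂ) • v ζ + v (ζ - kb)) + cJac f (ub ζ) (v ζ)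

/-- The formal adjoint `L* w = ω̄ w' + μ[w(·+k̄) − 2w + w(·−k̄)] + Df(ū(·))ᵀ w`. -/
noncomputable def LopStar {d : ℕ} (μ ωb kb : ℝ) (f : (Fin d → ℝ) → (Fin d → ℝ))
    (ub : ℝ → Fin d → ℝ) (w : ℝ → Fin d → ℂ) (ζ : ℝ) : Fin d → ℂ :=
  ωb • deriv w ζ + μ • (w (ζ + kb) - (2:ℂ) • w ζ + w (ζ - kb)) + cJacT f (ub ζ) (w ζ)

/-! Pairing `L* w` with `v` and `w` with `L v`, the Jacobian terms cancel (`Df` against `Dfᵀ`),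
the derivative terms add up to `ω̄ (⟨w', v⟩ + ⟨w, v'⟩)`, which is the `t`-derivative of
`⟨w, v⟩(k̄ j + ω̄ t)`, and the difference terms are of the form `g(ζ + k̄) − g(ζ)`. Summed over the
`N` points `k̄ j + ω̄ t` these telescope to `g(ζ₀ + 1) − g(ζ₀) = 0` by periodicity. -/

open Matrix

theorem sum_starRingEnd_mul_eq_star_dotProduct {R ι : Type*} [CommSemiring R] [StarRing R]
    [Fintype ι] (a b : ι → R) : ∑ i, starRingEnd R (a i) * b i = star a ⬝ᵥ b :=
  rfl

theorem Function.Periodic.sum_range_add_inv {M : Type*} [AddCommMonoid M] {g : ℝ → M}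
    (hg : Function.Periodic g 1) (N : ℕ) (c : ℝ) :
    ∑ j ∈ Finset.range N, g ((j : ℝ) / N + c + 1 / N) =
      ∑ j ∈ Finset.range N, g ((j : ℝ) / N + c) := by
  have hshift (j : ℕ) : g ((j : ℝ) / N + c + 1 / N) = g (((j + 1 : ℕ) : ℝ) / N + c) := by
    push_cast; ring_nf
  simp_rw [hshift]
  rcases N with _ | n
  · simp
  have hwrap : g (((n + 1 : ℕ) : ℝ) / (n + 1 : ℕ) + c) = g (((0 : ℕ) : ℝ) / (n + 1 : ℕ) + c) := by
    rw [div_self (by positivity), Nat.cast_zero, zero_div, zero_add, add_comm, hg]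
  rw [Finset.sum_range_succ, Finset.sum_range_succ' (fun j => g ((j : ℝ) / (n + 1 : ℕ) + c)),
    hwrap]

theorem HasDerivAt.star_dotProduct {𝕜 ι : Type*} [RCLike 𝕜] [Fintype ι] {v w : ℝ → ι → 𝕜}
    {v' w' : ι → 𝕜} {x : ℝ} (hw : HasDerivAt w w' x) (hv : HasDerivAt v v' x) :
    HasDerivAt (fun y => star (w y) ⬝ᵥ v y) (star w' ⬝ᵥ v x + star (w x) ⬝ᵥ v') x := by
  refine (HasDerivAt.fun_sum fun i _ =>
    (hasDerivAt_pi.mp hw i).star.mul (hasDerivAt_pi.mp hv i)).congr_deriv ?_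
  simp only [dotProduct, Finset.sum_add_distrib, Pi.star_apply]

theorem star_cJacT_dotProduct {d : ℕ} (f : (Fin d → ℝ) → (Fin d → ℝ)) (x : Fin d → ℝ)
    (w v : Fin d → ℂ) : star (cJacT f x w) ⬝ᵥ v = star w ⬝ᵥ cJac f x v := by
  simp only [cJac, cJacT, dotProduct, Pi.star_apply, star_sum, star_mul', Complex.star_def,
    Complex.conj_ofReal, Finset.mul_sum, Finset.sum_mul]
  rw [Finset.sum_comm]
  exact Finset.sum_congr rfl fun i _ => Finset.sum_congr rfl fun l _ => by ring

theorem star_LopStar_dotProduct_sub_dotProduct_Lop {d : ℕ} (μ ωb kb : ℝ)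
    (f : (Fin d → ℝ) → (Fin d → ℝ)) (ub : ℝ → Fin d → ℝ) (v w : ℝ → Fin d → ℂ) (x : ℝ) :
    star (LopStar μ ωb kb f ub w x) ⬝ᵥ v x - star (w x) ⬝ᵥ Lop μ ωb kb f ub v x =
      ωb • (star (deriv w x) ⬝ᵥ v x + star (w x) ⬝ᵥ deriv v x) +
      μ • ((star (w (x + kb)) ⬝ᵥ v x - star (w x) ⬝ᵥ v (x - kb)) +
        (star (w (x - kb)) ⬝ᵥ v x - star (w x) ⬝ᵥ v (x + kb))) := by
  simp only [LopStar, Lop, star_add, star_sub, star_smul, star_trivial, star_ofNat,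
    add_dotProduct, sub_dotProduct, smul_dotProduct, dotProduct_add, dotProduct_sub,
    dotProduct_smul, star_cJacT_dotProduct]
  module

theorem discrete_duality_transport_general
    (d N : ℕ) (μ ωb : ℝ)
    (f : (Fin d → ℝ) → (Fin d → ℝ))
    (ub : ℝ → Fin d → ℝ)
    (v w : ℝ → Fin d → ℂ) (hv : ContDiff ℝ 1 v) (hw : ContDiff ℝ 1 w)
    (hvper : ∀ ζ : ℝ, v (ζ + 1) = v ζ) (hwper : ∀ ζ : ℝ, w (ζ + 1) = w ζ) :
    ∀ t : ℝ, HasDerivAt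
      (fun t' : ℝ => ∑ j ∈ Finset.range N, ∑ i : Fin d,
        (starRingEnd ℂ) (w ((j:ℝ)/(N:ℝ) + ωb * t') i) * v ((j:ℝ)/(N:ℝ) + ωb * t') i)
      (∑ j ∈ Finset.range N,
        ((∑ i : Fin d, (starRingEnd ℂ) (LopStar μ ωb (1/(N:ℝ)) f ub w ((j:ℝ)/(N:ℝ) + ωb * t) i)
            * v ((j:ℝ)/(N:ℝ) + ωb * t) i)
        - ∑ i : Fin d, (starRingEnd ℂ) (w ((j:ℝ)/(N:ℝ) + ωb * t) i)
            * Lop μ ωb (1/(N:ℝ)) f ub v ((j:ℝ)/(N:ℝ) + ωb * t) i)) t := by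
  intro t
  have hpair (j : ℕ) :
      HasDerivAt (fun t' => star (w ((j : ℝ) / N + ωb * t')) ⬝ᵥ v ((j : ℝ) / N + ωb * t'))
        (ωb • (star (deriv w ((j : ℝ) / N + ωb * t)) ⬝ᵥ v ((j : ℝ) / N + ωb * t)
          + star (w ((j : ℝ) / N + ωb * t)) ⬝ᵥ deriv v ((j : ℝ) / N + ωb * t))) t := by
    have haffine : HasDerivAt (fun t' : ℝ => (j : ℝ) / N + ωb * t') ωb t := by
      simpa using ((hasDerivAt_id t).const_mul ωb).const_add ((j : ℝ) / N)
    exact ((hw.differentiable one_ne_zero _).hasDerivAt.star_dotProduct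
      (hv.differentiable one_ne_zero _).hasDerivAt).scomp t haffine
  have hshift_fwd := Function.Periodic.sum_range_add_inv (g := fun y => star (w y) ⬝ᵥ v (y - 1 / N))
    (fun y => by simp only [add_sub_right_comm, hvper, hwper]) N (ωb * t)
  have hshift_bwd := Function.Periodic.sum_range_add_inv (g := fun y => star (w (y - 1 / N)) ⬝ᵥ v y)
    (fun y => by simp only [add_sub_right_comm, hvper, hwper]) N (ωb * t)
  simp only [add_sub_cancel_right] at hshift_fwd hshift_bwd
  refine (HasDerivAt.fun_sum (u := Finset.range N) fun j _ => hpair j).congr_deriv ?_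
  simp only [sum_starRingEnd_mul_eq_star_dotProduct, star_LopStar_dotProduct_sub_dotProduct_Lop,
    Finset.sum_add_distrib, ← Finset.smul_sum, Finset.sum_sub_distrib, hshift_fwd, hshift_bwd,
    sub_self, add_zero, smul_zero]

/-- Duality relation: for `1`-periodic `C¹` functions `v, w`,
`d/dt Σ_j ⟨w(k̄j+ω̄t), v(k̄j+ω̄t)⟩ = Σ_j [⟨L*w, v⟩ − ⟨w, Lv⟩](k̄j+ω̄t)`. -/
theorem discrete_duality_transport
    (d N : ℕ) [NeZero N] (hd : 0 < d) (μ ωb : ℝ) (hω : ωb ≠ 0)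
    (f : (Fin d → ℝ) → (Fin d → ℝ)) (hf : ContDiff ℝ 1 f)
    (ub : ℝ → Fin d → ℝ) (hub : Continuous ub) (hubper : ∀ ζ : ℝ, ub (ζ + 1) = ub ζ)
    (v w : ℝ → Fin d → ℂ) (hv : ContDiff ℝ 1 v) (hw : ContDiff ℝ 1 w)
    (hvper : ∀ ζ : ℝ, v (ζ + 1) = v ζ) (hwper : ∀ ζ : ℝ, w (ζ + 1) = w ζ) :
    ∀ t : ℝ, HasDerivAt
      (fun t' : ℝ => ∑ j ∈ Finset.range N, ∑ i : Fin d,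
        (starRingEnd ℂ) (w ((j:ℝ)/(N:ℝ) + ωb * t') i) * v ((j:ℝ)/(N:ℝ) + ωb * t') i)
      (∑ j ∈ Finset.range N,
        ((∑ i : Fin d, (starRingEnd ℂ) (LopStar μ ωb (1/(N:ℝ)) f ub w ((j:ℝ)/(N:ℝ) + ωb * t) i)
            * v ((j:ℝ)/(N:ℝ) + ωb * t) i)
        - ∑ i : Fin d, (starRingEnd ℂ) (w ((j:ℝ)/(N:ℝ) + ωb * t) i)
            * Lop μ ωb (1/(N:ℝ)) f ub v ((j:ℝ)/(N:ℝ) + ωb * t) i)) t :=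
  discrete_duality_transport_general d N μ ωb f ub v w hv hw hvper hwper
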